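/- arXiv:2501.06767 — 3 statements merged into one kernel-verified Lean document; each statement's English description precedes it below -/
import Mathlib

section
/- Let (Π_i)_{i≥1} be a sequence of i.i.d. non-negative real random variables, and let k, N be positive integers. For each 1 ≤ p ≤ k let I_p ⊆ ℕ be a subset with exactly N elements, and set Z_p = ∏_{i ∈ I_p} Π_i. Then E[∏_{p=1}^k Z_p] ≤ (E[Π_1^k])^N. In other words, the expectation of the product is maximal when all the subsets I_p coincide. -/
/-!
Hölder's inequality with `k` equal exponents bounds `E[∏ p, Z p]` by `∏ p, E[(Z p)^k]^(1/k)`.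
By independence each `E[(Z p)^k] = ∏ i ∈ I p, E[Π i^k]`, which by identical distribution is
`E[Π₁^k]^N`, whatever the set `I p` is; the `k` factors `(E[Π₁^k]^N)^(1/k)` multiply to `E[Π₁^k]^N`.
-/

open MeasureTheory ProbabilityTheory ENNReal Finset

theorem lintegral_prod_le_prod_lintegral_pow_card_rpow_inv {α ι : Type*} [MeasurableSpace α]
    {μ : Measure α} (s : Finset ι) (hs : s.Nonempty) {f : ι → α → ℝ≥0∞}
    (hf : ∀ i ∈ s, AEMeasurable (f i) μ) :
    ∫⁻ a, ∏ i ∈ s, f i a ∂μ ≤ ∏ i ∈ s, (∫⁻ a, f i a ^ #s ∂μ) ^ ((#s : ℝ)⁻¹) := by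
  have hcard : #s ≠ 0 := hs.card_ne_zero
  simpa only [ENNReal.pow_rpow_inv_natCast hcard] using
    lintegral_prod_norm_pow_le s (f := fun i a => f i a ^ #s) (p := fun _ => (#s : ℝ)⁻¹)
      (fun i hi => (hf i hi).pow_const _) (by simp [hcard]) (fun _ _ => by positivity)

theorem lintegral_prod_pow_eq_of_iIndepFun_of_identDistrib {Ω Ω' ι : Type*}
    [MeasurableSpace Ω] [MeasurableSpace Ω'] {μ : Measure Ω} {ν : Measure Ω'}
    {X : ι → Ω → ℝ≥0∞} {Y : Ω' → ℝ≥0∞} (hindep : iIndepFun X μ) (hmeas : ∀ i, Measurable (X i))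
    (s : Finset ι) (hident : ∀ i ∈ s, IdentDistrib (X i) Y μ ν) (n : ℕ) :
    ∫⁻ ω, (∏ i ∈ s, X i ω) ^ n ∂μ = (∫⁻ y, Y y ^ n ∂ν) ^ #s := by
  have hpow : Measurable fun x : ℝ≥0∞ => x ^ n := measurable_id.pow_const n
  calc ∫⁻ ω, (∏ i ∈ s, X i ω) ^ n ∂μ = ∫⁻ ω, ∏ i ∈ s, X i ω ^ n ∂μ := by
        simp only [prod_pow]
    _ = ∏ i ∈ s, ∫⁻ ω, X i ω ^ n ∂μ :=
        lintegral_prod_eq_prod_lintegral_of_indepFun s _ (hindep.comp _ fun _ => hpow)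
          fun i => hpow.comp (hmeas i)
    _ = ∏ i ∈ s, ∫⁻ y, Y y ^ n ∂ν :=
        prod_congr rfl fun i hi => ((hident i hi).comp hpow).lintegral_eq
    _ = (∫⁻ y, Y y ^ n ∂ν) ^ #s := prod_const _

theorem product_rearrangement_bound_general
    {Ω : Type*} [MeasurableSpace Ω] (μ : Measure Ω)
    (X : ℕ → Ω → ℝ≥0∞) (hmeas : ∀ i, Measurable (X i))
    (hindep : iIndepFun X μ)
    (hident : ∀ i, μ.map (X i) = μ.map (X 0))
    (k N : ℕ) (hk : 0 < k)
    (I : Fin k → Finset ℕ) (hcard : ∀ p, (I p).card = N) :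
    ∫⁻ ω, ∏ p : Fin k, ∏ i ∈ I p, X i ω ∂μ ≤ (∫⁻ ω, (X 0 ω) ^ k ∂μ) ^ N := by
  have hX : ∀ i, IdentDistrib (X i) (X 0) μ μ :=
    fun i => ⟨(hmeas i).aemeasurable, (hmeas 0).aemeasurable, hident i⟩
  calc ∫⁻ ω, ∏ p : Fin k, ∏ i ∈ I p, X i ω ∂μ
      ≤ ∏ p : Fin k, (∫⁻ ω, (∏ i ∈ I p, X i ω) ^ k ∂μ) ^ ((k : ℝ)⁻¹) := by
        simpa using lintegral_prod_le_prod_lintegral_pow_card_rpow_inv univ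
          (univ_nonempty_iff.2 ⟨⟨0, hk⟩⟩) fun p _ =>
            (Finset.measurable_prod (I p) fun i _ => hmeas i).aemeasurable
    _ = ∏ _p : Fin k, ((∫⁻ ω, X 0 ω ^ k ∂μ) ^ N) ^ ((k : ℝ)⁻¹) := by
        simp only [lintegral_prod_pow_eq_of_iIndepFun_of_identDistrib hindep hmeas _
          (fun i _ => hX i), hcard]
    _ = (∫⁻ ω, X 0 ω ^ k ∂μ) ^ N := by
        rw [prod_const, card_univ, Fintype.card_fin, ENNReal.rpow_inv_natCast_pow hk.ne']

/-- For i.i.d. non-negative random variables `(Π i)` and subsets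
`I p ⊆ ℕ` each of cardinality `N`, the expectation of the product
`∏_{p=1}^k ∏_{i ∈ I p} Π i` is at most `(E[Π₁^k])^N`. -/
theorem product_rearrangement_bound
    {Ω : Type*} [MeasurableSpace Ω] (μ : Measure Ω) [IsProbabilityMeasure μ]
    (X : ℕ → Ω → ℝ≥0∞) (hmeas : ∀ i, Measurable (X i))
    (hindep : iIndepFun X μ)
    (hident : ∀ i, μ.map (X i) = μ.map (X 0))
    (k N : ℕ) (hk : 0 < k) (hN : 0 < N)
    (I : Fin k → Finset ℕ) (hcard : ∀ p, (I p).card = N) :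
    ∫⁻ ω, ∏ p : Fin k, ∏ i ∈ I p, X i ω ∂μ ≤ (∫⁻ ω, (X 0 ω) ^ k ∂μ) ^ N :=
  product_rearrangement_bound_general μ X hmeas hindep hident k N hk I hcard
end

section
/- Let (Π_i)_{i≥1} be i.i.d. non-negative random variables and let k ≥ 1, N ≥ 1. Suppose each index i belongs to N_i of the sets I_1,…,I_k (each of cardinality N). Then ∑_{i} N_i = kN, and by Jensen's inequality applied to x ↦ x^{k/j} on ℝ₊, ∏_{j=1}^k E[Π_1^j]^{n_j} ≤ E[Π_1^k]^N, where n_j = #{i : N_i = j}, using that ∑_{j=1}^k j·n_j/k = N. -/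
/-!
Double counting the incidences `i ∈ I p` gives `∑ i, N_i = k N`, hence `∑ j, j n_j = k N`.
By Lyapunov's inequality, `E[Π^j] ≤ M^j` for `1 ≤ j ≤ k`, where `M = E[Π^k]^(1/k)`, so the product
is at most `M^(∑ j, j n_j) = M^(k N) = E[Π^k]^N`.
-/

open MeasureTheory ENNReal Finset

theorem Finset.sum_mul_card_filter_eq_sum {ι : Type*} {s : Finset ι} {t : Finset ℕ} {f : ι → ℕ}
    (h : ∀ i ∈ s, f i ∈ t) : ∑ j ∈ t, j * #{i ∈ s | f i = j} = ∑ i ∈ s, f i := by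
  rw [← sum_fiberwise_of_maps_to h]
  refine sum_congr rfl fun j _ => ?_
  rw [sum_congr rfl fun i hi => (mem_filter.1 hi).2, sum_const, smul_eq_mul, mul_comm]

section Lyapunov

variable {Ω : Type*} [MeasurableSpace Ω] {μ : Measure Ω} [IsProbabilityMeasure μ]
  {X : Ω → ℝ≥0∞}

theorem lintegral_pow_le_pow_rpow_inv_lintegral_pow (hX : AEMeasurable X μ) {j k : ℕ}
    (hj : 0 < j) (hjk : j ≤ k) :
    ∫⁻ ω, X ω ^ j ∂μ ≤ ((∫⁻ ω, X ω ^ k ∂μ) ^ (k⁻¹ : ℝ)) ^ j := by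
  have hnorm := eLpNorm'_le_eLpNorm'_of_exponent_le (Nat.cast_pos.2 hj) (Nat.cast_le.2 hjk) μ
    hX.aestronglyMeasurable
  simp only [eLpNorm', enorm_eq_self, rpow_natCast, one_div] at hnorm
  calc ∫⁻ ω, X ω ^ j ∂μ = ((∫⁻ ω, X ω ^ j ∂μ) ^ (j⁻¹ : ℝ)) ^ j :=
        (rpow_inv_natCast_pow hj.ne' _).symm
    _ ≤ ((∫⁻ ω, X ω ^ k ∂μ) ^ (k⁻¹ : ℝ)) ^ j := pow_le_pow_left' hnorm j

theorem prod_lintegral_pow_pow_le (hX : AEMeasurable X μ) {k N : ℕ} (hk : k ≠ 0) (m : ℕ → ℕ)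
    (hm : ∑ j ∈ Icc 1 k, j * m j = k * N) :
    ∏ j ∈ Icc 1 k, (∫⁻ ω, X ω ^ j ∂μ) ^ m j ≤ (∫⁻ ω, X ω ^ k ∂μ) ^ N := by
  set M := (∫⁻ ω, X ω ^ k ∂μ) ^ (k⁻¹ : ℝ)
  calc ∏ j ∈ Icc 1 k, (∫⁻ ω, X ω ^ j ∂μ) ^ m j ≤ ∏ j ∈ Icc 1 k, (M ^ j) ^ m j := by
        refine prod_le_prod' fun j hj => pow_le_pow_left' ?_ _
        obtain ⟨hj1, hjk⟩ := mem_Icc.1 hj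
        exact lintegral_pow_le_pow_rpow_inv_lintegral_pow hX hj1 hjk
    _ = (M ^ k) ^ N := by simp only [← pow_mul, prod_pow_eq_pow_sum, hm]
    _ = (∫⁻ ω, X ω ^ k ∂μ) ^ N := by rw [rpow_inv_natCast_pow hk]

end Lyapunov

theorem counting_and_jensen_bound_general
    {Ω : Type*} [MeasurableSpace Ω] (μ : Measure Ω) [IsProbabilityMeasure μ]
    (X : Ω → ℝ≥0∞) (hX : Measurable X)
    (k N : ℕ) (hk : 0 < k)
    (I : Fin k → Finset ℕ) (hcard : ∀ p, (I p).card = N)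
    (Ncount : ℕ → ℕ)
    (hNcount : ∀ i, Ncount i = (Finset.univ.filter (fun p : Fin k => i ∈ I p)).card)
    (n : ℕ → ℕ)
    (hn : ∀ j, n j = ((Finset.univ.biUnion I).filter (fun i => Ncount i = j)).card) :
    (∑ i ∈ Finset.univ.biUnion I, Ncount i) = k * N ∧
    ∏ j ∈ Finset.Icc 1 k, (∫⁻ ω, X ω ^ j ∂μ) ^ (n j) ≤ (∫⁻ ω, X ω ^ k ∂μ) ^ N := by
  have hsum : ∑ i ∈ univ.biUnion I, Ncount i = k * N := by
    simpa [hcard, ← hNcount] using (sum_card_eq_sum_biUnion_card I univ).symm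
  have hNcount_mem : ∀ i ∈ univ.biUnion I, Ncount i ∈ Icc 1 k := by
    intro i hi
    obtain ⟨p, -, hip⟩ := mem_biUnion.1 hi
    rw [mem_Icc, hNcount]
    exact ⟨card_pos.2 ⟨p, by simpa using hip⟩, (card_le_univ _).trans_eq (Fintype.card_fin k)⟩
  refine ⟨hsum, prod_lintegral_pow_pow_le hX.aemeasurable hk.ne' n ?_⟩
  simp only [hn, sum_mul_card_filter_eq_sum hNcount_mem, hsum]

/-- With `I p ⊆ ℕ` (p = 1,…,k) each of cardinality `N`, letting
`Ncount i = #{p : i ∈ I p}` and `n j = #{i : Ncount i = j}`, one has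
`∑ i Ncount i = k·N`, and for a non-negative random variable `X`,
`∏_{j=1}^k E[X^j]^{n j} ≤ E[X^k]^N` (Jensen's inequality for `x ↦ x^{k/j}`). -/
theorem counting_and_jensen_bound
    {Ω : Type*} [MeasurableSpace Ω] (μ : Measure Ω) [IsProbabilityMeasure μ]
    (X : Ω → ℝ≥0∞) (hX : Measurable X)
    (k N : ℕ) (hk : 0 < k) (hN : 0 < N)
    (I : Fin k → Finset ℕ) (hcard : ∀ p, (I p).card = N)
    (Ncount : ℕ → ℕ)
    (hNcount : ∀ i, Ncount i = (Finset.univ.filter (fun p : Fin k => i ∈ I p)).card)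
    (n : ℕ → ℕ)
    (hn : ∀ j, n j = ((Finset.univ.biUnion I).filter (fun i => Ncount i = j)).card) :
    (∑ i ∈ Finset.univ.biUnion I, Ncount i) = k * N ∧
    ∏ j ∈ Finset.Icc 1 k, (∫⁻ ω, X ω ^ j ∂μ) ^ (n j) ≤ (∫⁻ ω, X ω ^ k ∂μ) ^ N :=
  counting_and_jensen_bound_general μ X hX k N hk I hcard Ncount hNcount n hn
end

section
/- Let γ ≥ 0 and for Γ > 0 let S_Γ be a random variable with density (1/(2K_γ(2Γ))) e^{γ s − 2Γ cosh s} on ℝ. Then for every α ∈ (0,1) there exists δ_0 > 0 such that for all Γ ∈ (0, δ_0): P(e^{2 S_Γ} ≥ Γ^{−α}) ≥ (1−α)/2. In particular, as Γ → 0 the law of e^{2S_Γ} is not tight: its tail at level Γ^{−α} stays bounded below. -/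
/-!
Write `f(t) = e^{γt - x cosh t}` with `x = 2Γ`, `L = -log Γ` and `T = αL/2`, so that the event is
`S ≥ T`. Since `γ ≥ 0`, `f(-t) ≤ f(t)` for `t ≥ 0`, hence the mass of `(-∞, -T]` is at most that of
`[T, ∞)`. On `[-T, T]` we have `f ≤ e^{γT}`, while on `[T, L - 3]` the term `x cosh t` is at most
`1/4`, so `f ≥ (3/4) e^{γT}` there. The window `[-T, T]` therefore carries at most
`2T / ((3/4)(L - 3 - T))` times the mass of `[T, ∞)`, which for `L ≥ 9` is small enough to give
`(1 - α) ∫ f ≤ 2 ∫_{[T, ∞)} f`.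
-/

open MeasureTheory

/-- Modified Bessel function of the second kind,
`K_γ(x) = (1/2)∫_{-∞}^{∞} e^{γt - x cosh t} dt`. -/
noncomputable def besselK (γ x : ℝ) : ℝ :=
  (1 / 2) * ∫ t : ℝ, Real.exp (γ * t - x * Real.cosh t)

open Real Set

namespace Real

lemma cosh_le_exp_abs (t : ℝ) : cosh t ≤ exp |t| := by
  rw [← cosh_abs, cosh_eq]
  linarith [exp_le_exp.2 (neg_le_self (abs_nonneg t))]

lemma exp_abs_le_two_mul_cosh (t : ℝ) : exp |t| ≤ 2 * cosh t := by
  rw [← cosh_abs, cosh_eq]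
  linarith [exp_pos (-|t|)]

lemma sq_div_four_le_cosh (t : ℝ) : t ^ 2 / 4 ≤ cosh t := by
  nlinarith [quadratic_le_exp_of_nonneg (abs_nonneg t), exp_abs_le_two_mul_cosh t, sq_abs t,
    abs_nonneg t]

end Real

/-- The integrand is dominated by a Gaussian: `γt - x cosh t ≤ γt - xt²/4 ≤ 2γ²/x - xt²/8`. -/
lemma integrable_exp_mul_sub_mul_cosh (γ : ℝ) {x : ℝ} (hx : 0 < x) :
    Integrable fun t => exp (γ * t - x * cosh t) := by
  refine ((integrable_exp_neg_mul_sq (by positivity : 0 < x / 8)).const_mul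
    (exp (2 * γ ^ 2 / x))).mono' (by fun_prop) (Filter.Eventually.of_forall fun t => ?_)
  rw [norm_of_nonneg (exp_pos _).le, ← exp_add, exp_le_exp]
  have hlin : γ * t ≤ 2 * γ ^ 2 / x + x * t ^ 2 / 8 := by
    rw [div_add' _ _ _ hx.ne', le_div_iff₀ hx]
    nlinarith [sq_nonneg (x * t / 4 - γ)]
  nlinarith [mul_le_mul_of_nonneg_left (sq_div_four_le_cosh t) hx.le]

lemma integral_le_two_mul_integral_Ioi_add {f : ℝ → ℝ} (hf : Integrable f) {T : ℝ}
    (hsymm : ∀ t, T < t → f (-t) ≤ f t) :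
    ∫ t, f t ≤ 2 * (∫ t in Ioi T, f t) + ∫ t in -T..T, f t := by
  have hleft : ∫ t in Iic (-T), f t ≤ ∫ t in Ioi T, f t := by
    rw [← integral_comp_neg_Ioi]
    exact setIntegral_mono_on hf.comp_neg.integrableOn hf.integrableOn measurableSet_Ioi hsymm
  rw [← intervalIntegral.integral_Iic_add_Ioi (b := -T) hf.integrableOn hf.integrableOn,
    ← intervalIntegral.integral_interval_add_Ioi (a := -T) (b := T) hf.integrableOn
      hf.integrableOn]
  linarith

lemma intervalIntegral_exp_mul_sub_mul_cosh_le {γ x T : ℝ} (hγ : 0 ≤ γ) (hx : 0 ≤ x)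
    (hT : 0 ≤ T) :
    ∫ t in -T..T, exp (γ * t - x * cosh t) ≤ 2 * T * exp (γ * T) := by
  calc ∫ t in -T..T, exp (γ * t - x * cosh t) ≤ ∫ _ in -T..T, exp (γ * T) := by
        refine intervalIntegral.integral_mono_on (by linarith)
          ((by fun_prop : Continuous _).intervalIntegrable _ _) intervalIntegrable_const
          fun t ht => exp_le_exp.2 ?_
        nlinarith [ht.2, cosh_pos t]
    _ = 2 * T * exp (γ * T) := by simp; ring

lemma mul_exp_le_integral_Ioi_exp_mul_sub_mul_cosh {γ x T M : ℝ} (hγ : 0 ≤ γ) (hx : 0 < x)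
    (hT : 0 ≤ T) (hTM : T ≤ M) (hxM : x * exp M ≤ 1 / 4) :
    3 / 4 * (M - T) * exp (γ * T) ≤ ∫ t in Ioi T, exp (γ * t - x * cosh t) := by
  have hf := integrable_exp_mul_sub_mul_cosh γ hx
  have hlower : ∀ t ∈ Icc T M, 3 / 4 * exp (γ * T) ≤ exp (γ * t - x * cosh t) := by
    intro t ht
    have hcosh : x * cosh t ≤ 1 / 4 := by
      have : exp |t| ≤ exp M := exp_le_exp.2 ((abs_of_nonneg (hT.trans ht.1)).trans_le ht.2)
      nlinarith [cosh_le_exp_abs t]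
    calc 3 / 4 * exp (γ * T) ≤ (1 - x * cosh t) * exp (γ * t) :=
          mul_le_mul (by linarith) (exp_le_exp.2 (by nlinarith [ht.1])) (exp_pos _).le
            (by linarith)
      _ ≤ exp (-(x * cosh t)) * exp (γ * t) := by
          gcongr
          linarith [add_one_le_exp (-(x * cosh t))]
      _ = exp (γ * t - x * cosh t) := by rw [← exp_add]; ring_nf
  rw [← intervalIntegral.integral_interval_add_Ioi hf.integrableOn hf.integrableOn]
  calc 3 / 4 * (M - T) * exp (γ * T) = ∫ _ in T..M, 3 / 4 * exp (γ * T) := by simp; ring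
    _ ≤ ∫ t in T..M, exp (γ * t - x * cosh t) :=
        intervalIntegral.integral_mono_on hTM intervalIntegrable_const hf.intervalIntegrable
          hlower
    _ ≤ _ :=
        le_add_of_nonneg_right (setIntegral_nonneg measurableSet_Ioi fun _ _ => (exp_pos _).le)

lemma one_sub_mul_integral_le_two_mul_integral_Ioi {γ x α L : ℝ} (hγ : 0 ≤ γ) (hx : 0 < x)
    (hα0 : 0 < α) (hα1 : α < 1) (hL : 9 ≤ L) (hxL : x * exp L ≤ 2) :
    (1 - α) * ∫ t, exp (γ * t - x * cosh t) ≤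
      2 * ∫ t in Ioi (α * L / 2), exp (γ * t - x * cosh t) := by
  set T := α * L / 2 with hT_def
  have hT : 0 ≤ T := by positivity
  have hTM : T ≤ L - 3 := by nlinarith
  have hxM : x * exp (L - 3) ≤ 1 / 4 := by
    have h3 : 8 ≤ exp 3 := by nlinarith [quadratic_le_exp_of_nonneg (by norm_num : (0 : ℝ) ≤ 3)]
    rw [exp_sub, ← mul_div_assoc, div_le_iff₀ (exp_pos 3)]
    linarith
  have hsymm : ∀ t, T < t → exp (γ * -t - x * cosh (-t)) ≤ exp (γ * t - x * cosh t) := by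
    intro t ht
    rw [cosh_neg]
    gcongr
    nlinarith
  have hsplit := integral_le_two_mul_integral_Ioi_add (integrable_exp_mul_sub_mul_cosh γ hx) hsymm
  have hmid := intervalIntegral_exp_mul_sub_mul_cosh_le hγ hx.le hT
  have htail := mul_exp_le_integral_Ioi_exp_mul_sub_mul_cosh hγ hx hT hTM hxM
  set p := ∫ t in Ioi T, exp (γ * t - x * cosh t)
  have hcoef : (1 - α) * T ≤ α * (3 / 4 * (L - 3 - T)) := by
    nlinarith [mul_nonneg hα0.le (sub_nonneg.2 hL)]
  calc (1 - α) * ∫ t, exp (γ * t - x * cosh t) ≤ (1 - α) * (2 * p + 2 * T * exp (γ * T)) :=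
        mul_le_mul_of_nonneg_left (by linarith) (by linarith)
    _ = 2 * (1 - α) * p + 2 * ((1 - α) * T) * exp (γ * T) := by ring
    _ ≤ 2 * (1 - α) * p + 2 * (α * (3 / 4 * (L - 3 - T))) * exp (γ * T) := by gcongr
    _ ≤ 2 * (1 - α) * p + 2 * α * p := by
        linarith [mul_le_mul_of_nonneg_left htail hα0.le]
    _ = 2 * p := by ring

lemma withDensity_ofReal_const_mul_apply {X : Type*} [MeasurableSpace X] {μ : Measure X}
    {f : X → ℝ} (hf : Integrable f μ) (hf0 : 0 ≤ᵐ[μ] f) {c : ℝ} (hc : 0 ≤ c) {A : Set X}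
    (hA : MeasurableSet A) :
    μ.withDensity (fun s => ENNReal.ofReal (c * f s)) A =
      ENNReal.ofReal (c * ∫ s in A, f s ∂μ) := by
  rw [withDensity_apply _ hA, ← integral_const_mul,
    ofReal_integral_eq_lintegral_ofReal (hf.const_mul c).integrableOn]
  exact ae_restrict_of_ae (hf0.mono fun s hs => mul_nonneg hc hs)

lemma setOf_rpow_neg_le_exp_two_mul {Γ : ℝ} (hΓ : 0 < Γ) (α : ℝ) :
    {s : ℝ | Γ ^ (-α) ≤ exp (2 * s)} = Ici (α * -log Γ / 2) := by
  ext s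
  rw [mem_ofPred_eq, mem_Ici, rpow_def_of_pos hΓ, exp_le_exp]
  constructor <;> intro h <;> linarith

/-- Laplace-method estimate, equation (eqRec1): for `γ ≥ 0` and
`α ∈ (0,1)` there is `δ₀ > 0` such that for all `Γ ∈ (0, δ₀)`, a random
variable `S_Γ` with density `(1/(2K_γ(2Γ))) e^{γs − 2Γ cosh s}` satisfies
`P(e^{2S_Γ} ≥ Γ^{−α}) ≥ (1−α)/2`. -/
theorem gig_small_parameter_tail_lower_bound
    (γ : ℝ) (hγ : 0 ≤ γ) (α : ℝ) (hα0 : 0 < α) (hα1 : α < 1) :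
    ∃ δ₀ : ℝ, 0 < δ₀ ∧ ∀ Γ : ℝ, 0 < Γ → Γ < δ₀ →
      ENNReal.ofReal ((1 - α) / 2) ≤
        ((volume : Measure ℝ).withDensity (fun s =>
            ENNReal.ofReal ((1 / (2 * besselK γ (2 * Γ))) *
              Real.exp (γ * s - 2 * Γ * Real.cosh s))))
          {s : ℝ | Γ ^ (-α) ≤ Real.exp (2 * s)} := by
  refine ⟨exp (-9), exp_pos _, fun Γ hΓ hΓδ => ?_⟩
  have hL : 9 ≤ -log Γ := by linarith [log_exp (-9) ▸ log_lt_log hΓ hΓδ]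
  have hxL : 2 * Γ * exp (-log Γ) ≤ 2 := by rw [exp_neg, exp_log hΓ, mul_inv_cancel_right₀ hΓ.ne']
  have hf := integrable_exp_mul_sub_mul_cosh γ (by positivity : 0 < 2 * Γ)
  have hI : 0 < ∫ t, exp (γ * t - 2 * Γ * cosh t) := integral_exp_pos hf
  have hK : 2 * besselK γ (2 * Γ) = ∫ t, exp (γ * t - 2 * Γ * cosh t) := by rw [besselK]; ring
  rw [hK, setOf_rpow_neg_le_exp_two_mul hΓ,
    withDensity_ofReal_const_mul_apply hf (.of_forall fun _ => (exp_pos _).le) (by positivity)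
      measurableSet_Ici, integral_Ici_eq_integral_Ioi, one_div, ← div_eq_inv_mul]
  refine ENNReal.ofReal_le_ofReal ((le_div_iff₀ hI).2 ?_)
  linarith [one_sub_mul_integral_le_two_mul_integral_Ioi hγ (by positivity) hα0 hα1 hL hxL]
end
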